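/- arXiv:2601.05972 — 2 statements merged into one kernel-verified Lean document; each statement's English description precedes it below -/
import Mathlib

section
/- Let A be a flat layout and let N_1 ≤ N_2 be positive integers such that A is N_1-complementable and N_2-complementable. Then the layout function of comp(A,N_2) restricted to {0,…,size(comp(A,N_1))−1} equals the layout function of comp(A,N_1): Φ_{comp(A,N_2)}(x) = Φ_{comp(A,N_1)}(x) for all x ∈ {0,…,size(comp(A,N_1))−1}. -/
/-- A flat layout, represented as its list of modes `(sᵢ, dᵢ)`:
the first component of each mode is a shape entry, the second a stride entry. -/
abbrev FlatLayout := List (ℕ × ℕ)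

namespace FlatLayout

/-- Validity of a flat layout: every shape entry is a positive integer. -/
def Valid (L : FlatLayout) : Prop := ∀ p ∈ L, 0 < p.1

/-- The size of a flat layout: the product of its shape entries. -/
def size (L : FlatLayout) : ℕ := (L.map Prod.fst).prod

/-- The cosize of a flat layout: `1 + Σ (sᵢ - 1) * dᵢ`. -/
def cosize (L : FlatLayout) : ℕ := 1 + (L.map fun p => (p.1 - 1) * p.2).sum

/-- The rank of a flat layout: its number of modes. -/
def rank (L : FlatLayout) : ℕ := L.length

/-- The layout function `Φ_L`: `Φ_L(x) = Σ xᵢ·dᵢ` where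
`xᵢ = ⌊x / (s₁⋯sᵢ₋₁)⌋ mod sᵢ`. -/
def phi : FlatLayout → ℕ → ℕ
  | [], _ => 0
  | (s, d) :: rest, x => x % s * d + phi rest (x / s)

/-- `squeeze L` deletes every mode whose shape entry equals `1`. -/
def squeeze (L : FlatLayout) : FlatLayout := L.filter fun p => p.1 != 1

/-- `filterZeros L` deletes every mode whose stride entry equals `0`. -/
def filterZeros (L : FlatLayout) : FlatLayout := L.filter fun p => p.2 != 0

/-- The ordering on modes: `(s,d) ⪯ (s',d')` iff `d < d'`, or `d = d'` and `s ≤ s'`. -/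
def ModeLE (p q : ℕ × ℕ) : Prop := p.2 < q.2 ∨ (p.2 = q.2 ∧ p.1 ≤ q.1)

instance : DecidableRel ModeLE := fun p q => by unfold ModeLE; infer_instance

/-- A flat layout is sorted if its consecutive modes are `⪯`-increasing. -/
def Sorted (L : FlatLayout) : Prop := L.Chain' ModeLE

/-- `sortL L` stably sorts the modes of `L` with respect to `⪯`. -/
def sortL (L : FlatLayout) : FlatLayout := L.mergeSort fun p q => decide (ModeLE p q)

/-- A flat layout is coalesced if no shape entry equals `1` and
for consecutive modes, `sᵢ·dᵢ ≠ dᵢ₊₁`. -/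
def Coalesced (L : FlatLayout) : Prop :=
  (∀ p ∈ L, p.1 ≠ 1) ∧ L.Chain' fun p q => p.1 * p.2 ≠ q.2

/-- Combine adjacent modes `(s,d), (s',d')` with `d' = s·d` into `(s·s', d)`, repeatedly. -/
def coalAux : List (ℕ × ℕ) → List (ℕ × ℕ)
  | [] => []
  | p :: rest =>
    match coalAux rest with
    | [] => [p]
    | q :: rest' =>
        if p.1 * p.2 = q.2 then (p.1 * q.1, p.2) :: rest' else p :: q :: rest'

/-- Coalesce of a flat layout: squeeze, then repeatedly combine adjacent modes
`(s,d), (s',d')` with `d' = s·d` into `(s·s', d)`. -/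
def coal (L : FlatLayout) : FlatLayout := coalAux (squeeze L)

/-- Compactness: the layout function takes values in `{0, …, cosize L - 1}` and induces a
bijection `{0, …, size L - 1} → {0, …, cosize L - 1}`. -/
def Compact (L : FlatLayout) : Prop :=
  Set.BijOn (phi L) {x | x < size L} {y | y < cosize L}

/-- `B` is a complement of `A` (written `A ⊥ B`) if the concatenation `A ⋆ B` is compact. -/
def Perp (A B : FlatLayout) : Prop := Compact (A ++ B)

/-- `A` is complementable if, writing `sort(squeeze A) = (s₁,…,sₘ):(d₁,…,dₘ)`,
`sᵢ·dᵢ` divides `dᵢ₊₁` for all `1 ≤ i < m`. -/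
def Complementable (A : FlatLayout) : Prop :=
  (sortL (squeeze A)).Chain' fun p q => p.1 * p.2 ∣ q.2

/-- `B` is an `N`-complement of `A` if `B` is a complement of `A`
and `size A * size B = N`. -/
def IsNComplement (A B : FlatLayout) (N : ℕ) : Prop :=
  Perp A B ∧ size A * size B = N

/-- `A` is `N`-complementable if, writing `sort(squeeze A) = (s₁,…,sₘ):(d₁,…,dₘ)`,
`sᵢ·dᵢ ∣ dᵢ₊₁` for all `1 ≤ i < m`, and `sₘ·dₘ ∣ N`. -/
def NComplementable (A : FlatLayout) (N : ℕ) : Prop :=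
  ((sortL (squeeze A)).Chain' fun p q => p.1 * p.2 ∣ q.2) ∧
  ∀ p, (sortL (squeeze A)).getLast? = some p → p.1 * p.2 ∣ N

/-- Given `l = [(s₁,d₁),…,(sₘ,dₘ)]`, the layout
`C = (d₁, d₂/(s₁d₁), …, dₘ/(sₘ₋₁dₘ₋₁)) : (1, s₁d₁, …, sₘ₋₁dₘ₋₁)`. -/
def compModes (l : List (ℕ × ℕ)) : List (ℕ × ℕ) :=
  match l with
  | [] => []
  | (_, d₁) :: t =>
      (d₁, 1) :: (l.zip t).map fun pq => (pq.2.2 / (pq.1.1 * pq.1.2), pq.1.1 * pq.1.2)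

/-- The complement `comp A = coal C` of a complementable flat layout `A`. -/
def comp (A : FlatLayout) : FlatLayout := coal (compModes (sortL (squeeze A)))

/-- Given `l = [(s₁,d₁),…,(sₘ,dₘ)]` and `N`, the layout
`C = (d₁, d₂/(s₁d₁), …, dₘ/(sₘ₋₁dₘ₋₁), N/(sₘdₘ)) : (1, s₁d₁, …, sₘ₋₁dₘ₋₁, sₘdₘ)`. -/
def compNModes (l : List (ℕ × ℕ)) (N : ℕ) : List (ℕ × ℕ) :=
  match l.getLast? with
  | none => [(N, 1)]
  | some (sm, dm) => compModes l ++ [(N / (sm * dm), sm * dm)]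

/-- The `N`-complement `comp(A, N) = coal C` of an `N`-complementable flat layout `A`. -/
def compN (A : FlatLayout) (N : ℕ) : FlatLayout :=
  coal (compNModes (sortL (squeeze A)) N)

/-- `L` is tractable if, writing `sort L = (s₁,…,sₘ):(d₁,…,dₘ)`, for every `1 ≤ i < m`
either `dᵢ = 0` or `sᵢ·dᵢ` divides `dᵢ₊₁`. -/
def Tractable (L : FlatLayout) : Prop :=
  (sortL L).Chain' fun p q => p.2 = 0 ∨ p.1 * p.2 ∣ q.2

end FlatLayout



namespace FlatLayout

lemma coalAux_cons (p : ℕ × ℕ) (rest : List (ℕ × ℕ)) :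
    coalAux (p :: rest) = match coalAux rest with
      | [] => [p]
      | q :: rest' => if p.1 * p.2 = q.2 then (p.1 * q.1, p.2) :: rest' else p :: q :: rest' := by
  rfl

lemma phi_coalAux (L : FlatLayout) : ∀ x, phi (coalAux L) x = phi L x := by
  induction L with
  | nil => intro x; rfl
  | cons p rest ih =>
    intro x
    obtain ⟨s, d⟩ := p
    show phi (coalAux ((s,d)::rest)) x = x % s * d + phi rest (x / s)
    rw [← ih (x / s), coalAux_cons]
    cases h : coalAux rest with
    | nil => simp [phi]
    | cons q rest' =>
      by_cases hm : s * d = q.2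
      · simp only [if_pos hm]
        show x % (s * q.1) * d + phi rest' (x / (s * q.1)) = _
        rw [Nat.mod_mul, ← Nat.div_div_eq_div_mul]
        simp [phi, ← hm]
        ring
      · simp [phi, hm]

lemma size_coalAux (L : FlatLayout) : size (coalAux L) = size L := by
  induction L with
  | nil => rfl
  | cons p rest ih =>
    show size (coalAux (p::rest)) = p.1 * size rest
    rw [← ih, coalAux_cons]
    cases h : coalAux rest with
    | nil => simp [size]
    | cons q rest' =>
      by_cases hm : p.1 * p.2 = q.2
      · simp only [if_pos hm]
        show (p.1 * q.1) * size rest' = _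
        simp [size]
        ring
      · simp [size, hm]

lemma phi_squeeze (L : FlatLayout) : ∀ x, phi (squeeze L) x = phi L x := by
  induction L with
  | nil => intro x; rfl
  | cons p rest ih =>
    intro x
    obtain ⟨s, d⟩ := p
    by_cases hs : s = 1
    · subst hs
      show phi (squeeze ((1,d)::rest)) x = x % 1 * d + phi rest (x / 1)
      simp only [squeeze, List.filter_cons, bne_self_eq_false, Bool.false_eq_true, if_false]
      rw [show List.filter (fun p => p.1 != 1) rest = squeeze rest from rfl, ih]
      simp [Nat.mod_one]
    · show phi (squeeze ((s,d)::rest)) x = x % s * d + phi rest (x / s)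
      have hb : ((s,d).1 != 1) = true := by simpa using hs
      simp only [squeeze, List.filter_cons, hb, if_pos]
      simp only [phi]
      rw [← squeeze, ih]

lemma size_squeeze (L : FlatLayout) : size (squeeze L) = size L := by
  induction L with
  | nil => rfl
  | cons p rest ih =>
    show size (squeeze (p::rest)) = p.1 * size rest
    by_cases hs : p.1 = 1
    · have hb : (p.1 != 1) = false := by simpa using hs
      simp only [squeeze, List.filter_cons, hb]
      simp only [Bool.false_eq_true, if_false]
      rw [← squeeze, ih, hs, one_mul]
    · have hb : (p.1 != 1) = true := by simpa using hs
      simp only [squeeze, List.filter_cons, hb, if_pos]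
      show p.1 * size (List.filter _ rest) = _
      rw [← squeeze, ih]

lemma phi_coal (L : FlatLayout) (x : ℕ) : phi (coal L) x = phi L x := by
  rw [coal, phi_coalAux, phi_squeeze]

lemma size_coal (L : FlatLayout) : size (coal L) = size L := by
  rw [coal, size_coalAux, size_squeeze]

lemma phi_append (L1 L2 : FlatLayout) : ∀ x, phi (L1 ++ L2) x = phi L1 x + phi L2 (x / size L1) := by
  induction L1 with
  | nil => intro x; simp [phi, size]
  | cons p rest ih =>
    intro x
    obtain ⟨s, d⟩ := p
    show x % s * d + phi (rest ++ L2) (x / s) = x % s * d + phi rest (x / s) + _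
    rw [ih]
    have : size ((s,d)::rest) = s * size rest := by simp [size]
    rw [this, ← Nat.div_div_eq_div_mul]
    ring

lemma size_append (L1 L2 : FlatLayout) : size (L1 ++ L2) = size L1 * size L2 := by
  simp [size]

end FlatLayout

open FlatLayout in
theorem compN_restriction (A : FlatLayout) (N₁ N₂ : ℕ) (hA : A.Valid)
    (h1 : 0 < N₁) (h2 : 0 < N₂) (h12 : N₁ ≤ N₂)
    (hc1 : NComplementable A N₁) (hc2 : NComplementable A N₂) :
    ∀ x < size (compN A N₁), phi (compN A N₂) x = phi (compN A N₁) x := by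
  intro x hx
  unfold compN at *
  rw [size_coal] at hx
  rw [phi_coal, phi_coal]
  set l := sortL (squeeze A) with hl
  cases hlast : l.getLast? with
  | none =>
      simp only [compNModes, hlast] at *
      have hx1 : x < N₁ := by simpa [size, phi] using hx
      have hx2 : x < N₂ := lt_of_lt_of_le hx1 h12
      simp [phi, Nat.mod_eq_of_lt hx1, Nat.mod_eq_of_lt hx2]
  | some p =>
      obtain ⟨sm, dm⟩ := p
      simp only [compNModes, hlast] at *
      rw [size_append] at hx
      rw [phi_append, phi_append]
      set S := size (compModes l) with hS
      set k := sm * dm with hk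
      have hsize1 : size [(N₁ / k, k)] = N₁ / k := by simp [size]
      rw [hsize1] at hx
      have hS0 : 0 < S := by
        rcases Nat.eq_zero_or_pos S with h | h
        · rw [h] at hx; omega
        · exact h
      have hdiv : x / S < N₁ / k := by
        exact Nat.div_lt_of_lt_mul (hx)
      have hdiv2 : x / S < N₂ / k := lt_of_lt_of_le hdiv (Nat.div_le_div_right h12)
      simp [phi, Nat.mod_eq_of_lt hdiv, Nat.mod_eq_of_lt hdiv2]
end

section
/- A flat layout L can be encoded by a tuple morphism (i.e., there exists a tuple morphism f with L_f = L) if and only if L is tractable. -/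
/-- A tuple morphism `f : (s₁,…,sₘ) → (t₁,…,tₙ)` between tuples of positive integers:
a function `α : {1,…,m} → {*,1,…,n}` (with `*` encoded by `none`) such that no element of
`{1,…,n}` has more than one preimage, and `sᵢ = t_{α(i)}` whenever `α(i) ≠ *`. -/
structure TupleMorphism where
  /-- the domain tuple `(s₁,…,sₘ)` -/
  dom : List ℕ
  /-- the codomain tuple `(t₁,…,tₙ)` -/
  cod : List ℕ
  dom_pos : ∀ s ∈ dom, 0 < s
  cod_pos : ∀ t ∈ cod, 0 < t
  /-- the underlying function `α` -/
  map : Fin dom.length → Option (Fin cod.length)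
  inj : ∀ i j k, map i = some k → map j = some k → i = j
  compat : ∀ i k, map i = some k → dom.get i = cod.get k

namespace TupleMorphism

/-- The stride entries of the layout encoded by a tuple morphism:
`dᵢ = 0` if `α(i) = *`, and `dᵢ = t₁⋯t_{α(i)−1}` otherwise. -/
def stride (f : TupleMorphism) (i : Fin f.dom.length) : ℕ :=
  match f.map i with
  | none => 0
  | some k => ((f.cod.take k).prod)

/-- The flat layout `L_f = (s₁,…,sₘ):(d₁,…,dₘ)` encoded by a tuple morphism `f`. -/
def layout (f : TupleMorphism) : FlatLayout :=
  List.ofFn fun i => (f.dom.get i, f.stride i)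

/-- A tuple morphism is non-degenerate if `sᵢ = 1` implies `α(i) = *`. -/
def NonDegenerate (f : TupleMorphism) : Prop :=
  ∀ i, f.dom.get i = 1 → f.map i = none

/-- A tuple morphism has standard form if (1) `n > 1` implies `n ∈ Image(α)`, and
(2) for every `1 ≤ j < n` with `j ∉ Image(α)`, both `t_j ≠ 1` and `j+1 ∈ Image(α)`. -/
def StandardForm (f : TupleMorphism) : Prop :=
  (1 < f.cod.length → ∃ i k, f.map i = some k ∧ (k : ℕ) = f.cod.length - 1) ∧
  ∀ k : Fin f.cod.length, (k : ℕ) + 1 < f.cod.length →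
    (¬ ∃ i, f.map i = some k) →
      f.cod.get k ≠ 1 ∧ ∃ i k', f.map i = some k' ∧ (k' : ℕ) = (k : ℕ) + 1

end TupleMorphism

theorem List.Perm.exists_perm_map_eq {α β : Type*} {f : α → β} {l₁ l₂ : List β}
    (h : l₁.Perm l₂) : ∀ {Z : List α}, Z.map f = l₁ → ∃ Z', Z.Perm Z' ∧ Z'.map f = l₂ := by
  induction h with
  | nil => exact fun hZ => ⟨_, .rfl, hZ⟩
  | cons b _ ih =>
    rintro (_ | ⟨z, Z⟩) hZ
    · cases hZ
    · simp only [List.map_cons, List.cons.injEq] at hZ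
      obtain ⟨rfl, hZ⟩ := hZ
      obtain ⟨Z', hp, rfl⟩ := ih hZ
      exact ⟨z :: Z', hp.cons z, rfl⟩
  | swap a b l =>
    rintro (_ | ⟨z, _ | ⟨z', Z⟩⟩) hZ <;> simp only [List.map_cons, List.map_nil,
      List.cons.injEq, reduceCtorEq, and_false] at hZ
    obtain ⟨rfl, rfl, rfl⟩ := hZ
    exact ⟨z' :: z :: Z, .swap z' z Z, rfl⟩
  | trans _ _ ih₁ ih₂ =>
    intro Z hZ
    obtain ⟨Z', hp, hZ'⟩ := ih₁ hZ
    obtain ⟨Z'', hp', hZ''⟩ := ih₂ hZ'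
    exact ⟨Z'', hp.trans hp', hZ''⟩

theorem List.Nodup.eq_of_filterMap_eq_some {α β : Type*} {f : α → Option β} {l : List α}
    (h : (l.filterMap f).Nodup) {i j : ℕ} (hi : i < l.length) (hj : j < l.length) {b : β}
    (hib : f l[i] = some b) (hjb : f l[j] = some b) : i = j := by
  have hR := List.pairwise_iff_getElem.mp (List.pairwise_filterMap.mp h)
  by_contra hij
  rcases Nat.lt_or_gt_of_ne hij with h | h
  exacts [hR i j hi hj h _ hib _ hjb rfl, hR j i hj hi h _ hjb _ hib rfl]

namespace FlatLayout

/-- `ModeFits t (m, α)`: a tuple morphism into `t` sending the mode `m` to the codomain index `α`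
(counted from `0`, with `none` for `*`) encodes the mode `m`. -/
def ModeFits (t : List ℕ) (z : (ℕ × ℕ) × Option ℕ) : Prop :=
  match z.2 with
  | none => z.1.2 = 0
  | some k => t[k]? = some z.1.1 ∧ z.1.2 = (t.take k).prod

/-- A tuple morphism into `t`, recorded as its domain modes labelled by their images under `α`. -/
def IsEncoding (t : List ℕ) (Z : List ((ℕ × ℕ) × Option ℕ)) : Prop :=
  (∀ x ∈ t, 0 < x) ∧ (Z.filterMap Prod.snd).Nodup ∧ ∀ z ∈ Z, ModeFits t z

def HasEncoding (L : FlatLayout) : Prop :=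
  ∃ t Z, IsEncoding t Z ∧ Z.map Prod.fst = L

variable {t : List ℕ} {z : (ℕ × ℕ) × Option ℕ} {Z Z' : List ((ℕ × ℕ) × Option ℕ)}

theorem ModeFits.lt_length {k : ℕ} (h : ModeFits t z) (hz : z.2 = some k) : k < t.length := by
  rw [ModeFits, hz] at h
  exact (List.getElem?_eq_some_iff.mp h.1).1

theorem ModeFits.append (h : ModeFits t z) (u : List ℕ) : ModeFits (t ++ u) z := by
  rcases hz : z.2 with _ | k
  · simpa only [ModeFits, hz] using h
  · have hk := h.lt_length hz
    simp only [ModeFits, hz] at h ⊢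
    rwa [List.getElem?_append_left hk, List.take_append_of_le_length hk.le]

theorem ModeFits.stride_eq_zero_or_dvd (ht : ∀ x ∈ t, 0 < x) {a b : (ℕ × ℕ) × Option ℕ}
    (ha : ModeFits t a) (hb : ModeFits t b)
    (hab : ∀ k, a.2 = some k → ∀ l, b.2 = some l → k ≠ l) (hle : ModeLE a.1 b.1) :
    a.1.2 = 0 ∨ a.1.1 * a.1.2 ∣ b.1.2 := by
  obtain ⟨⟨s, d⟩, _ | k⟩ := a
  · exact .inl ha
  obtain ⟨⟨s', d'⟩, _ | l⟩ := b
  · exact .inr (hb ▸ dvd_zero _)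
  obtain ⟨hs, rfl⟩ := ha
  obtain ⟨hs', rfl⟩ := hb
  obtain ⟨hk, rfl⟩ := List.getElem?_eq_some_iff.mp hs
  obtain ⟨hl, rfl⟩ := List.getElem?_eq_some_iff.mp hs'
  right
  have hP : ∀ {i j}, i ≤ j → (t.take i).prod ∣ (t.take j).prod :=
    fun hij => (List.take_sublist_take_left hij).prod_dvd_prod
  have hPpos : ∀ i, 0 < (t.take i).prod :=
    fun i => List.prod_pos fun x hx => ht x (List.mem_of_mem_take hx)
  simp only at hle ⊢
  rw [mul_comm, ← List.prod_take_succ]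
  rcases (hab k rfl l rfl).lt_or_gt with hkl | hlk
  · exact hP hkl
  · -- the strides coincide, which forces `t[l] = 1`, and then also `t[k] = 1`
    have hPeq : (t.take k).prod = (t.take l).prod := by
      have := Nat.le_of_dvd (hPpos k) (hP hlk.le)
      unfold ModeLE at hle
      omega
    have hl1 : t[l] ≤ 1 := by
      have h := Nat.le_of_dvd (hPpos k) (hP hlk)
      rw [List.prod_take_succ _ _ hl, ← hPeq] at h
      exact Nat.le_of_mul_le_mul_left (by simpa using h) (hPpos k)
    have hk1 : t[k] = 1 := by
      have := ht _ (List.getElem_mem hk)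
      unfold ModeLE at hle
      omega
    rw [List.prod_take_succ _ _ hk, hk1, mul_one, hPeq]

theorem IsEncoding.append_star (h : IsEncoding t Z) (s : ℕ) :
    IsEncoding t (Z ++ [((s, 0), none)]) := by
  obtain ⟨ht, hnd, hfit⟩ := h
  refine ⟨ht, by simpa using hnd, ?_⟩
  simp only [List.mem_append, List.mem_singleton]
  rintro z (hz | rfl)
  exacts [hfit z hz, rfl]

theorem IsEncoding.append_mode {s d : ℕ} (h : IsEncoding t Z) (hs : 0 < s) (hd : 0 < d) (hdvd : t.prod ∣ d) :
    IsEncoding (t ++ [d / t.prod, s]) (Z ++ [((s, d), some (t.length + 1))]) := by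
  obtain ⟨ht, hnd, hfit⟩ := h
  have htprod : 0 < t.prod := List.prod_pos ht
  refine ⟨?_, ?_, ?_⟩
  · simp only [List.mem_append, List.mem_cons, List.not_mem_nil, or_false]
    rintro x (hx | rfl | rfl)
    exacts [ht x hx, Nat.div_pos (Nat.le_of_dvd hd hdvd) htprod, hs]
  · rw [List.filterMap_append, List.nodup_append]
    refine ⟨hnd, List.nodup_singleton _, fun k hk l hl => ?_⟩
    obtain ⟨z, hz, hzk⟩ := List.mem_filterMap.mp hk
    rw [List.mem_singleton.mp hl]
    exact ((hfit z hz).lt_length hzk).trans_le (Nat.le_succ _) |>.ne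
  · simp only [List.mem_append, List.mem_singleton]
    rintro z (hz | rfl)
    · exact (hfit z hz).append _
    · refine ⟨by simp, ?_⟩
      simp [List.take_append, List.take_of_length_le, Nat.mul_div_cancel' hdvd]

theorem IsEncoding.perm (h : IsEncoding t Z) (hZ : Z.Perm Z') : IsEncoding t Z' :=
  ⟨h.1, (hZ.filterMap _).nodup_iff.mp h.2.1, fun z hz => h.2.2 z (hZ.mem_iff.mpr hz)⟩

theorem HasEncoding.perm {L M : FlatLayout} (hL : HasEncoding L) (h : L.Perm M) :
    HasEncoding M := by
  obtain ⟨t, Z, hZ, rfl⟩ := hL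
  obtain ⟨Z', hp, rfl⟩ := h.exists_perm_map_eq rfl
  exact ⟨t, Z', hZ.perm hp, rfl⟩

theorem _root_.TupleMorphism.hasEncoding_layout (f : TupleMorphism) : HasEncoding f.layout := by
  refine ⟨f.cod, List.ofFn fun i => ((f.dom.get i, f.stride i), (f.map i).map Fin.val),
    ⟨f.cod_pos, ?_, ?_⟩, by simp only [TupleMorphism.layout, List.map_ofFn]; rfl⟩
  · rw [List.Nodup, List.pairwise_filterMap, List.pairwise_ofFn]
    intro i j hij k hk l hl hkl
    obtain ⟨a, ha, rfl⟩ := Option.map_eq_some_iff.mp hk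
    obtain ⟨b, hb, rfl⟩ := Option.map_eq_some_iff.mp hl
    cases Fin.ext hkl
    exact hij.ne (f.inj i j a ha hb)
  · rintro _ hz
    obtain ⟨i, rfl⟩ := List.mem_ofFn.mp hz
    rcases hi : f.map i with _ | k
    · simp [ModeFits, TupleMorphism.stride, hi]
    · simpa [ModeFits, TupleMorphism.stride, hi] using (f.compat i k hi).symm

theorem HasEncoding.exists_tupleMorphism {L : FlatLayout} (hL : L.Valid)
    (h : HasEncoding L) : ∃ f : TupleMorphism, f.layout = L := by
  obtain ⟨t, Z, ⟨ht, hnd, hfit⟩, rfl⟩ := h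
  have hlen (i : Fin (Z.map (·.1.1)).length) : i.1 < Z.length := by simpa using i.2
  let α (i : Fin (Z.map (·.1.1)).length) : Option (Fin t.length) :=
    (Z[i.1]'(hlen i)).2.pmap Fin.mk fun _ hk => (hfit _ (List.getElem_mem _)).lt_length hk
  refine ⟨⟨Z.map (·.1.1), t, ?_, ht, α, ?_, ?_⟩, ?_⟩
  · simp only [List.mem_map]
    rintro _ ⟨z, hz, rfl⟩
    exact hL z.1 (List.mem_map_of_mem hz)
  · intro i j k hαi hαj
    obtain ⟨_, _, hi, rfl⟩ := Option.pmap_eq_some_iff.mp hαi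
    obtain ⟨_, _, hj, hk⟩ := Option.pmap_eq_some_iff.mp hαj
    cases Fin.mk.inj hk
    exact Fin.ext (hnd.eq_of_filterMap_eq_some (hlen i) (hlen j) hi hj)
  · intro i k hαi
    obtain ⟨_, _, hi, rfl⟩ := Option.pmap_eq_some_iff.mp hαi
    have hfi := hfit _ (List.getElem_mem (hlen i))
    simp only [ModeFits, hi] at hfi
    simpa using (List.getElem?_eq_some_iff.mp hfi.1).2.symm
  · refine List.ext_getElem (by simp [TupleMorphism.layout]) fun n h₁ h₂ => ?_
    simp only [TupleMorphism.layout, List.getElem_ofFn, List.getElem_map, TupleMorphism.stride]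
    refine Prod.ext (by simp) ?_
    have hn : n < (Z.map (·.1.1)).length := by simpa using h₂
    have hZn : n < Z.length := hlen ⟨n, hn⟩
    have hfn := hfit _ (List.getElem_mem hZn)
    rcases hα : α ⟨n, hn⟩ with _ | k
    · have hz : Z[n].2 = none := Option.pmap_eq_none_iff.mp hα
      simp only [ModeFits, hz] at hfn
      simpa using hfn.symm
    · obtain ⟨_, _, hz, rfl⟩ := Option.pmap_eq_some_iff.mp hα
      simp only [ModeFits, hz] at hfn
      simpa using hfn.2.symm

theorem HasEncoding.isChain_of_pairwise {M : FlatLayout} (h : HasEncoding M)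
    (hM : M.Pairwise ModeLE) : M.IsChain fun p q => p.2 = 0 ∨ p.1 * p.2 ∣ q.2 := by
  obtain ⟨t, Z, ⟨ht, hnd, hfit⟩, rfl⟩ := h
  refine (List.pairwise_map.mpr (((List.pairwise_map.mp hM).and
    (List.pairwise_filterMap.mp hnd)).imp_of_mem ?_)).isChain
  exact fun ha hb hab => (hfit _ ha).stride_eq_zero_or_dvd ht (hfit _ hb) hab.2 hab.1

theorem exists_isEncoding_of_isChain {M : FlatLayout} (hV : M.Valid)
    (hsort : M.IsChain ModeLE) (htr : M.IsChain fun p q => p.2 = 0 ∨ p.1 * p.2 ∣ q.2) :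
    ∃ t Z, IsEncoding t Z ∧ Z.map Prod.fst = M ∧
      (t = [] ∨ ∃ p ∈ M.getLast?, 0 < p.2 ∧ t.prod = p.1 * p.2) := by
  induction M using List.reverseRecOn with
  | nil => exact ⟨[], [], ⟨by simp, by simp, by simp⟩, rfl, .inl rfl⟩
  | append_singleton M m ih =>
    obtain ⟨s, d⟩ := m
    rw [List.isChain_append] at hsort htr
    have hs : 0 < s := hV (s, d) (by simp)
    obtain ⟨t, Z, hZ, rfl, hinv⟩ := ih (fun p hp => hV p (by simp [hp])) hsort.1 htr.1
    rcases Nat.eq_zero_or_pos d with rfl | hd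
    · refine ⟨t, Z ++ [((s, 0), none)], hZ.append_star s, by simp, .inl ?_⟩
      refine hinv.resolve_right ?_
      rintro ⟨p, hp, hp0, -⟩
      have := hsort.2.2 p hp _ rfl
      unfold ModeLE at this
      omega
    · have hdvd : t.prod ∣ d := by
        rcases hinv with rfl | ⟨p, hp, hp0, hprod⟩
        · exact one_dvd d
        · rw [hprod]
          exact (htr.2.2 p hp _ rfl).resolve_left hp0.ne'
      refine ⟨t ++ [d / t.prod, s], Z ++ [((s, d), some (t.length + 1))],
        hZ.append_mode hs hd hdvd, by simp, .inr ⟨(s, d), by simp, hd, ?_⟩⟩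
      simp only [List.prod_append, List.prod_cons, List.prod_nil, mul_one, ← mul_assoc,
        Nat.mul_div_cancel' hdvd, mul_comm d]

theorem hasEncoding_of_isChain {M : FlatLayout} (hV : M.Valid) (hsort : M.IsChain ModeLE)
    (htr : M.IsChain fun p q => p.2 = 0 ∨ p.1 * p.2 ∣ q.2) : HasEncoding M :=
  let ⟨t, Z, hZ, hmap, _⟩ := exists_isEncoding_of_isChain hV hsort htr
  ⟨t, Z, hZ, hmap⟩

theorem pairwise_sortL (L : FlatLayout) : (sortL L).Pairwise ModeLE :=
  (List.pairwise_mergeSort (fun a b c => by simp only [decide_eq_true_eq]; unfold ModeLE; omega)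
    (fun a b => by simp only [Bool.or_eq_true, decide_eq_true_eq]; unfold ModeLE; omega) L).imp
    of_decide_eq_true

end FlatLayout

open FlatLayout in
theorem exists_tupleMorphism_iff_tractable (L : FlatLayout) (hL : L.Valid) :
    (∃ f : TupleMorphism, f.layout = L) ↔ Tractable L := by
  have hperm : (sortL L).Perm L := List.mergeSort_perm L _
  constructor
  · rintro ⟨f, rfl⟩
    exact (f.hasEncoding_layout.perm hperm.symm).isChain_of_pairwise (pairwise_sortL _)
  · intro htr
    have hV : (sortL L).Valid := fun p hp => hL p (hperm.subset hp)
    exact ((hasEncoding_of_isChain hV (pairwise_sortL L).isChain htr).perm hperm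
      ).exists_tupleMorphism hL
end
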